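/- Let Ω ⊆ ℂ be open and nonempty. Then the set E of all holomorphic functions f on Ω such that f^{(k)} is unbounded on Ω for every integer k ≥ 0 (with f^{(0)} = f) is a dense G_δ subset of Hol(Ω). -/

import Mathlib

/-!
Write `E = ⋂_{k,n} V_{k,n}`, where `V_{k,n}` is the set of `f` with `n < |f^(k)(z)|` for some
`z ∈ Ω`. Each `V_{k,n}` is open because, by Weierstrass' theorem, `f ↦ f^(k)(z)` is continuous
for locally uniform convergence. It is dense: if `f ∉ V_{k,n}` then `f^(k)` is bounded, so
`f + c h ∈ V_{k,n}` for every `c ≠ 0`, where `h` is any holomorphic function with `h^(k)`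
unbounded on `Ω` (`exp` if `Ω = ℂ`, `1/(z - b)` for a boundary point `b` otherwise). Finally
`Hol(Ω)` is closed in the complete space of functions with the topology of compact convergence,
whose uniformity is countably generated by a compact exhaustion of `Ω`, so Baire's theorem
applies.
-/

open Set UniformOnFun Complex
open scoped UniformConvergence

noncomputable section

/-- The collection of compact subsets of `Ω`, used to define the topology of
uniform convergence on compacta. -/
def cpts (Ω : Set ℂ) : Set (Set ℂ) := {K | K ⊆ Ω ∧ IsCompact K}

/-- The space `Hol(Ω)` of holomorphic functions on `Ω`, as a submodule of the space of
functions `ℂ → ℂ` equipped with the topology of uniform convergence on compact subsets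
of `Ω`. -/
def Hol (Ω : Set ℂ) : Submodule ℂ (ℂ →ᵤ[cpts Ω] ℂ) where
  carrier := {f | DifferentiableOn ℂ (toFun (cpts Ω) f) Ω}
  add_mem' := fun hf hg => hf.add hg
  zero_mem' := differentiableOn_const 0
  smul_mem' := fun c f hf => hf.const_smul c

/-- `g` is unbounded on `X`. -/
def UnbOn (g : ℂ → ℂ) (X : Set ℂ) : Prop := ¬ ∃ C : ℝ, ∀ z ∈ X, ‖g z‖ ≤ C

open Filter Topology
open scoped Nat

section IteratedDeriv

variable {E : Type*} [NormedAddCommGroup E] [NormedSpace ℂ E] [CompleteSpace E] {U : Set ℂ}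

theorem DifferentiableOn.iteratedDeriv {f : ℂ → E} (hf : DifferentiableOn ℂ f U)
    (hU : IsOpen U) (k : ℕ) : DifferentiableOn ℂ (iteratedDeriv k f) U := by
  induction k with
  | zero => simpa using hf
  | succ k ih => simpa only [iteratedDeriv_succ] using ih.deriv hU

theorem TendstoLocallyUniformlyOn.iteratedDeriv {ι : Type*} {F : ι → ℂ → E} {f : ℂ → E}
    {l : Filter ι} (hf : TendstoLocallyUniformlyOn F f l U)
    (hF : ∀ᶠ i in l, DifferentiableOn ℂ (F i) U) (hU : IsOpen U) (k : ℕ) :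
    TendstoLocallyUniformlyOn (fun i => iteratedDeriv k (F i)) (iteratedDeriv k f) l U := by
  induction k with
  | zero => simpa using hf
  | succ k ih =>
    simpa only [iteratedDeriv_succ, Function.comp_def] using
      ih.deriv (hF.mono fun i hi => hi.iteratedDeriv hU k) hU

theorem iteratedDeriv_add_const_smul {f g : ℂ → E} (hf : DifferentiableOn ℂ f U)
    (hg : DifferentiableOn ℂ g U) (hU : IsOpen U) {z : ℂ} (hz : z ∈ U) (c : ℂ) (k : ℕ) :
    iteratedDeriv k (f + c • g) z = iteratedDeriv k f z + c • iteratedDeriv k g z := by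
  have hUz := hU.mem_nhds hz
  rw [iteratedDeriv_add ((hf.contDiffOn hU).contDiffAt hUz)
    (((hg.const_smul c).contDiffOn hU).contDiffAt hUz), iteratedDeriv_const_smul_field]

end IteratedDeriv

section Unbounded

variable {g g₁ g₂ : ℂ → ℂ} {X : Set ℂ}

theorem UnbOn.exists_lt (h : UnbOn g X) (C : ℝ) : ∃ z ∈ X, C < ‖g z‖ := by
  by_contra! hC
  exact h ⟨C, hC⟩

theorem unbOn_iff_forall_nat : UnbOn g X ↔ ∀ n : ℕ, ∃ z ∈ X, (n : ℝ) < ‖g z‖ := by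
  refine ⟨fun h n => h.exists_lt n, fun h ⟨C, hC⟩ => ?_⟩
  obtain ⟨n, hn⟩ := exists_nat_ge C
  obtain ⟨z, hz, hlt⟩ := h n
  exact (hlt.trans_le ((hC z hz).trans hn)).false

theorem UnbOn.congr (h : UnbOn g₁ X) (h₁₂ : EqOn g₁ g₂ X) : UnbOn g₂ X :=
  fun ⟨C, hC⟩ => h ⟨C, fun z hz => h₁₂ hz ▸ hC z hz⟩

theorem UnbOn.const_smul (h : UnbOn g X) {c : ℂ} (hc : c ≠ 0) : UnbOn (c • g) X := by
  rintro ⟨C, hC⟩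
  refine h ⟨C / ‖c‖, fun z hz => ?_⟩
  rw [le_div_iff₀ (norm_pos_iff.2 hc), mul_comm, ← norm_smul]
  exact hC z hz

theorem UnbOn.bounded_add {C : ℝ} (h₁ : ∀ z ∈ X, ‖g₁ z‖ ≤ C) (h₂ : UnbOn g₂ X) :
    UnbOn (g₁ + g₂) X := by
  rintro ⟨D, hD⟩
  refine h₂ ⟨D + C, fun z hz => ?_⟩
  calc ‖g₂ z‖ = ‖(g₁ + g₂) z - g₁ z‖ := by simp
    _ ≤ ‖(g₁ + g₂) z‖ + ‖g₁ z‖ := norm_sub_le _ _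
    _ ≤ D + C := add_le_add (hD z hz) (h₁ z hz)

theorem unbOn_of_tendsto {l : Filter ℂ} [l.NeBot] (hl : l ≤ 𝓟 X)
    (h : Tendsto (fun z => ‖g z‖) l atTop) : UnbOn g X := by
  rintro ⟨C, hC⟩
  obtain ⟨z, hlt, hz⟩ := ((h.eventually_gt_atTop C).and (hl (mem_principal_self X))).exists
  exact (hlt.trans_le (hC z hz)).false

theorem unbOn_iteratedDeriv_exp (k : ℕ) : UnbOn (iteratedDeriv k exp) univ := by
  rw [iteratedDeriv_eq_iterate, iter_deriv_exp]
  refine unbOn_of_tendsto (l := map ofReal atTop) (le_principal_iff.2 univ_mem) ?_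
  simpa [tendsto_map'_iff, Function.comp_def] using Real.tendsto_exp_atTop

theorem unbOn_iteratedDeriv_inv_sub {b : ℂ} (hb : b ∈ closure X) (hbX : b ∉ X) (k : ℕ) :
    UnbOn (iteratedDeriv k fun z => (z - b)⁻¹) X := by
  have : (𝓝[X] b).NeBot := mem_closure_iff_nhdsWithin_neBot.1 hb
  refine unbOn_of_tendsto (l := 𝓝[X] b) inf_le_right ?_
  have hnorm (z : ℂ) :
      ‖iteratedDeriv k (fun z => (z - b)⁻¹) z‖ = k ! * (‖z - b‖⁻¹) ^ (k + 1) := by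
    rw [iteratedDeriv_comp_sub_const (f := Inv.inv), iteratedDeriv_eq_iterate]
    dsimp only
    rw [iter_deriv_inv, norm_mul, norm_zpow,
      show (-1 - k : ℤ) = -((k + 1 : ℕ) : ℤ) by push_cast; ring, zpow_neg, zpow_natCast, inv_pow]
    simp
  simp only [hnorm]
  refine Tendsto.const_mul_atTop (by positivity) ((tendsto_pow_atTop k.succ_ne_zero).comp ?_)
  exact ((tendsto_norm_sub_self_nhdsNE b).inv_tendsto_nhdsGT_zero).mono_left
    (nhdsWithin_mono _ fun z hz hzb => hbX (hzb ▸ hz))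

end Unbounded

theorem exists_differentiableOn_unbOn_iteratedDeriv {Ω : Set ℂ} (hΩ : IsOpen Ω)
    (hne : Ω.Nonempty) (k : ℕ) :
    ∃ h : ℂ → ℂ, DifferentiableOn ℂ h Ω ∧ UnbOn (iteratedDeriv k h) Ω := by
  by_cases hΩ_univ : Ω = univ
  · subst hΩ_univ
    exact ⟨exp, differentiable_exp.differentiableOn, unbOn_iteratedDeriv_exp k⟩
  · obtain ⟨b, hb, hbΩ⟩ := nonempty_frontier_iff.2 ⟨hne, hΩ_univ⟩
    rw [hΩ.interior_eq] at hbΩ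
    refine ⟨fun z => (z - b)⁻¹, ?_, unbOn_iteratedDeriv_inv_sub hb hbΩ k⟩
    exact (differentiableOn_id.sub_const b).inv fun z hz =>
      sub_ne_zero.2 (ne_of_mem_of_not_mem hz hbΩ)

namespace Hol

variable {Ω : Set ℂ}

theorem tendstoLocallyUniformlyOn_toFun {ι : Type*} {F : ι → ℂ →ᵤ[cpts Ω] ℂ}
    {f : ℂ →ᵤ[cpts Ω] ℂ} {l : Filter ι} (hΩ : IsOpen Ω) (h : Tendsto F l (𝓝 f)) :
    TendstoLocallyUniformlyOn (fun i => toFun (cpts Ω) (F i)) (toFun (cpts Ω) f) l Ω := by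
  rw [tendstoLocallyUniformlyOn_iff_forall_isCompact hΩ]
  exact fun K hKΩ hK => UniformOnFun.tendsto_iff_tendstoUniformlyOn.1 h K ⟨hKΩ, hK⟩

theorem isClosed (hΩ : IsOpen Ω) : IsClosed (Hol Ω : Set (ℂ →ᵤ[cpts Ω] ℂ)) := by
  refine isClosed_of_closure_subset fun f hf => ?_
  have := mem_closure_iff_nhdsWithin_neBot.1 hf
  exact (tendstoLocallyUniformlyOn_toFun (F := id) (l := 𝓝[Hol Ω] f) hΩ
    (tendsto_id.mono_left nhdsWithin_le_nhds)).differentiableOn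
    eventually_mem_nhdsWithin hΩ

theorem baireSpace (hΩ : IsOpen Ω) : BaireSpace (Hol Ω) := by
  have : LocallyCompactSpace Ω := hΩ.locallyCompactSpace
  let K := CompactExhaustion.choice Ω
  have : IsCountablyGenerated (uniformity (ℂ →ᵤ[cpts Ω] ℂ)) :=
    UniformOnFun.isCountablyGenerated_uniformity (𝔖 := cpts Ω)
      (t := fun n => Subtype.val '' K n)
      (fun n => ⟨Subtype.coe_image_subset _ _, (K.isCompact n).image continuous_subtype_val⟩)
      (fun m n hmn => image_mono (K.subset hmn)) fun S ⟨hSΩ, hS⟩ => by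
        have hS' : IsCompact (Subtype.val ⁻¹' S : Set Ω) := by
          rwa [Subtype.isCompact_iff, Subtype.image_preimage_coe, inter_eq_right.2 hSΩ]
        obtain ⟨n, hn⟩ := K.exists_superset_of_isCompact hS'
        exact ⟨n, fun z hz => ⟨⟨z, hSΩ hz⟩, hn hz, rfl⟩⟩
  have : IsCountablyGenerated (uniformity (Hol Ω)) := by
    rw [uniformity_subtype]
    infer_instance
  have : CompleteSpace (Hol Ω) := (isClosed hΩ).completeSpace_coe
  exact BaireSpace.of_completelyPseudoMetrizable

theorem continuous_iteratedDeriv_apply (hΩ : IsOpen Ω) (k : ℕ) {z : ℂ} (hz : z ∈ Ω) :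
    Continuous fun f : Hol Ω => iteratedDeriv k (toFun (cpts Ω) f.1) z := by
  refine continuous_iff_continuousAt.2 fun f => ?_
  exact ((tendstoLocallyUniformlyOn_toFun hΩ continuous_subtype_val.continuousAt).iteratedDeriv
    (Eventually.of_forall fun g => g.2) hΩ k).tendsto_at hz

instance : ContinuousSMul ℂ (Hol Ω) :=
  UniformOnFun.continuousSMul_submodule_of_image_bounded ℂ ℂ ℂ (Hol Ω)
    fun _f hf _K ⟨hKΩ, hK⟩ => (hK.image_of_continuousOn (hf.continuousOn.mono hKΩ)).isVonNBounded ℂ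

def iteratedDerivExceeds (Ω : Set ℂ) (k : ℕ) (C : ℝ) : Set (Hol Ω) :=
  {f | ∃ z ∈ Ω, C < ‖iteratedDeriv k (toFun (cpts Ω) f.1) z‖}

theorem isOpen_iteratedDerivExceeds (hΩ : IsOpen Ω) (k : ℕ) (C : ℝ) :
    IsOpen (iteratedDerivExceeds Ω k C) := by
  refine isOpen_iff_forall_mem_open.2 fun f ⟨z, hz, hf⟩ => ⟨_, fun g hg => ⟨z, hz, hg⟩,
    isOpen_lt continuous_const (continuous_iteratedDeriv_apply hΩ k hz).norm, hf⟩

theorem dense_iteratedDerivExceeds (hΩ : IsOpen Ω) (hne : Ω.Nonempty) (k : ℕ) (C : ℝ) :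
    Dense (iteratedDerivExceeds Ω k C) := by
  obtain ⟨h, hh, hunb⟩ := exists_differentiableOn_unbOn_iteratedDeriv hΩ hne k
  let H : Hol Ω := ⟨ofFun (cpts Ω) h, hh⟩
  intro f
  by_cases hf : f ∈ iteratedDerivExceeds Ω k C
  · exact subset_closure hf
  have hbdd : ∀ z ∈ Ω, ‖iteratedDeriv k (toFun (cpts Ω) f.1) z‖ ≤ C := by
    simpa [iteratedDerivExceeds] using hf
  have hperturb : ∀ c : ℂ, c ≠ 0 → f + c • H ∈ iteratedDerivExceeds Ω k C := fun c hc =>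
    (((hunb.const_smul hc).bounded_add hbdd).congr fun z hz =>
      (iteratedDeriv_add_const_smul f.2 hh hΩ hz c k).symm).exists_lt C
  have hcont : Continuous fun c : ℂ => f + c • H := by fun_prop
  have hlim : Tendsto (fun c : ℂ => f + c • H) (𝓝[≠] 0) (𝓝 f) := by
    simpa using (hcont.tendsto 0).mono_left nhdsWithin_le_nhds
  exact mem_closure_of_tendsto hlim (eventually_nhdsWithin_of_forall hperturb)

end Hol

theorem stmt4 (Ω : Set ℂ) (hΩ : IsOpen Ω) (hne : Ω.Nonempty)
    (E : Set (Hol Ω))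
    (hE : E = {f : Hol Ω | ∀ k : ℕ, UnbOn (iteratedDeriv k (toFun (cpts Ω) f.1)) Ω}) :
    Dense E ∧ IsGδ E := by
  have hE' : E = ⋂ p : ℕ × ℕ, Hol.iteratedDerivExceeds Ω p.1 p.2 := by
    ext f
    simp [hE, unbOn_iff_forall_nat, Hol.iteratedDerivExceeds, Prod.forall]
  have hopen := fun p : ℕ × ℕ => Hol.isOpen_iteratedDerivExceeds hΩ p.1 p.2
  have := Hol.baireSpace hΩ
  rw [hE']
  exact ⟨dense_iInter_of_isOpen hopen fun p => Hol.dense_iteratedDerivExceeds hΩ hne p.1 p.2,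
    .iInter fun p => (hopen p).isGδ⟩
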